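/- arXiv:2003.12695 — 2 statements merged into one kernel-verified Lean document; each statement's English description precedes it below -/
import Mathlib

section
/- Let S be a supercharacter theory of a finite group G, let K be an S-class, and let g ∈ K. Then for every basic S-character χ ∈ BCh(S) and every irreducible constituent ψ ∈ Irr(χ): ω_ψ(K̂) = |K|·χ(g) / χ(1). -/
open scoped Classical

noncomputable section

/-- The set of irreducible complex characters of `G`, as functions `G → ℂ`. -/
def Irr (G : Type) [Group G] : Set (G → ℂ) :=
  {χ | ∃ V : FDRep ℂ G, CategoryTheory.Simple V ∧ χ = fun g => V.character g}

/-- For a set `X` of characters, `σ_X = ∑_{ψ ∈ X} ψ(1)·ψ`. -/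
def sigmaChar {G : Type} [Group G] (X : Set (G → ℂ)) : G → ℂ :=
  fun g => ∑ᶠ ψ ∈ X, ψ 1 * ψ g

/-- A supercharacter theory of a finite group `G`: a partition `parts` of `Irr G`
together with a partition `classes` of `G` such that `{1}` is a part,
the two partitions have the same number of parts, and each `σ_X` for `X ∈ parts`
is constant on each part of `classes`. -/
structure SuperCharTheory (G : Type) [Group G] [Fintype G] where
  parts : Set (Set (G → ℂ))
  classes : Set (Set G)
  parts_nonempty : ∀ X ∈ parts, X.Nonempty
  parts_disjoint : parts.PairwiseDisjoint id
  parts_cover : ⋃₀ parts = Irr G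
  classes_nonempty : ∀ K ∈ classes, K.Nonempty
  classes_disjoint : classes.PairwiseDisjoint id
  classes_cover : ⋃₀ classes = Set.univ
  one_mem : ({1} : Set G) ∈ classes
  card_eq : parts.ncard = classes.ncard
  sigma_const : ∀ X ∈ parts, ∀ K ∈ classes, ∀ g ∈ K, ∀ h ∈ K,
    sigmaChar X g = sigmaChar X h

/-- The set of basic `S`-characters (supercharacters) of a supercharacter theory. -/
def BCh {G : Type} [Group G] [Fintype G] (S : SuperCharTheory G) : Set (G → ℂ) :=
  sigmaChar '' S.parts

/-- The superclass sum `K̂ = ∑_{g ∈ K} g` in the complex group algebra. -/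
def classSum {G : Type} [Group G] (K : Set G) : MonoidAlgebra ℂ G :=
  ∑ᶠ g ∈ K, MonoidAlgebra.of ℂ G g

/-!
Orthogonality of irreducible characters makes the `σ_X`, `X ∈ 𝒳`, linearly independent. They
lie in the span of the indicators of the `S`-classes, and `|𝒳| = |𝒦|`, so the two spans agree
and every indicator `1_K` is a combination `∑ c_X σ_X`. Hence `1_K` is a class function, `K` is
a union of conjugacy classes, and `ω_ψ(K̂) = ψ(1)⁻¹ ∑_{x ∈ K} ψ(x)`. Pairing `1_K` against
`ψ ∈ X` extracts `c_X`, so `γ := ψ(1)⁻¹ ∑_{x ∈ K} ψ(x)` depends only on the part `X`; summing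
`φ(1) ∑_{x ∈ K} φ(x) = γ φ(1)²` over `φ ∈ X` gives `|K| σ_X(g) = γ σ_X(1)`.

The pairing produces `ψ(x⁻¹)`, which equals `conj (ψ x)` because the operator representing `x`
has finite order, so its eigenvalues are roots of unity.
-/

open Module Module.End Set ComplexConjugate LinearMap
open scoped ComplexOrder

namespace Module.End

variable {V : Type*} [AddCommGroup V] [Module ℂ V]

lemma conj_eq_inv_of_hasEigenvalue {f : End ℂ V} (hf : IsOfFinOrder f) {μ : ℂ}
    (hμ : f.HasEigenvalue μ) : conj μ = μ⁻¹ := by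
  obtain ⟨v, hv⟩ := hμ.exists_hasEigenvector
  have hpow : μ ^ orderOf f = 1 := by
    have h := hv.pow_apply (orderOf f)
    rw [pow_orderOf_eq_one, one_apply] at h
    exact smul_left_injective ℂ hv.2 (by simpa using h.symm)
  rw [Complex.inv_eq_conj (Complex.norm_eq_one_of_pow_eq_one hpow hf.orderOf_pos.ne')]

variable [FiniteDimensional ℂ V]

lemma trace_restrict_maxGenEigenspace_eq_conj {f g : End ℂ V} (hf : IsOfFinOrder f)
    (hgf : g * f = 1) (hcomm : Commute f g) {μ : ℂ} (hμ : f.maxGenEigenspace μ ≠ ⊥) :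
    trace ℂ _ (g.restrict (mapsTo_maxGenEigenspace_of_comm hcomm μ)) =
      conj (trace ℂ _ (f.restrict (mapsTo_maxGenEigenspace_of_comm (Commute.refl f) μ))) := by
  set p := f.restrict (mapsTo_maxGenEigenspace_of_comm (Commute.refl f) μ)
  set q := g.restrict (mapsTo_maxGenEigenspace_of_comm hcomm μ)
  have hnil : IsNilpotent (p - algebraMap ℂ _ μ) :=
    f.isNilpotent_restrict_maxGenEigenspace_sub_algebraMap μ
  have hqp : q * p = 1 := LinearMap.ext fun x => Subtype.ext congr($hgf x)
  have htrace_p : trace ℂ _ p = μ * finrank ℂ (f.maxGenEigenspace μ) := by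
    have h := trace_comp_eq_mul_of_commute_of_isNilpotent μ (Commute.one_left p) hnil
    rwa [← mul_eq_comp, one_mul, trace_one] at h
  have htrace_q : (finrank ℂ (f.maxGenEigenspace μ) : ℂ) = μ * trace ℂ _ q := by
    have h := trace_comp_eq_mul_of_commute_of_isNilpotent μ
      (restrict_commute hcomm.symm _ _ : Commute q p) hnil
    rwa [← mul_eq_comp, hqp, trace_one] at h
  have hd : (finrank ℂ (f.maxGenEigenspace μ) : ℂ) ≠ 0 :=
    Nat.cast_ne_zero.mpr (Submodule.finrank_eq_zero.not.mpr hμ)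
  have hμ0 : μ ≠ 0 := left_ne_zero_of_mul (htrace_q ▸ hd)
  have hconj := conj_eq_inv_of_hasEigenvalue hf
    (hasEigenvalue_of_hasGenEigenvalue (k := 1) (HasUnifEigenvalue.lt one_pos hμ))
  rw [htrace_p, map_mul, hconj, Complex.conj_natCast, htrace_q]
  field_simp

/-- On each generalized eigenspace a finite-order `f` acts as a root of unity `μ` plus a
nilpotent, so `f⁻¹` acts there with trace `μ⁻¹ * dim = conj μ * dim`. -/
theorem trace_eq_conj_trace_of_mul_eq_one {f g : End ℂ V} (hf : IsOfFinOrder f)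
    (hgf : g * f = 1) : trace ℂ V g = conj (trace ℂ V f) := by
  classical
  have hcomm : Commute f g := (mul_eq_one_comm.mpr hgf).trans hgf.symm
  have hindep := f.independent_maxGenEigenspace
  have hint := DirectSum.isInternal_submodule_of_iSupIndep_of_iSup_eq_top hindep
    f.iSup_maxGenEigenspace_eq_top
  have hfin := WellFoundedGT.finite_ne_bot_of_iSupIndep hindep
  rw [trace_eq_sum_trace_restrict' hint hfin (mapsTo_maxGenEigenspace_of_comm hcomm),
    trace_eq_sum_trace_restrict' hint hfin (mapsTo_maxGenEigenspace_of_comm (Commute.refl f)),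
    map_sum]
  exact Finset.sum_congr rfl fun μ hμ =>
    trace_restrict_maxGenEigenspace_eq_conj hf hgf hcomm (hfin.mem_toFinset.mp hμ)

end Module.End

lemma FDRep.char_inv {G : Type} [Group G] [Finite G] (V : FDRep ℂ G) (g : G) :
    V.character g⁻¹ = conj (V.character g) :=
  trace_eq_conj_trace_of_mul_eq_one (V.ρ.isOfFinOrder (isOfFinOrder_of_finite g))
    (by rw [← map_mul, inv_mul_cancel, map_one])

lemma FDRep.finrank_pos_of_simple {G : Type} [Group G] (V : FDRep ℂ G)
    [CategoryTheory.Simple V] : 0 < finrank ℂ V := by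
  refine Nat.pos_of_ne_zero fun h => CategoryTheory.id_nonzero V ?_
  have : Subsingleton V := finrank_zero_iff.mp h
  exact Action.hom_ext _ _ (by ext v; exact Subsingleton.elim _ _)

/-- `|G|` times the usual inner product of class functions, with complex conjugation replaced
by inversion. -/
def charPairing (G : Type) [Group G] [Fintype G] : LinearMap.BilinForm ℂ (G → ℂ) :=
  LinearMap.mk₂ ℂ (fun f h => ∑ g, f g * h g⁻¹)
    (fun _ _ _ => by simp only [Pi.add_apply, add_mul, Finset.sum_add_distrib])
    (fun _ _ _ => by simp only [Pi.smul_apply, smul_eq_mul, mul_assoc, Finset.mul_sum])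
    (fun _ _ _ => by simp only [Pi.add_apply, mul_add, Finset.sum_add_distrib])
    (fun _ _ _ => by simp only [Pi.smul_apply, smul_eq_mul, mul_left_comm, Finset.mul_sum])

lemma charPairing_apply {G : Type} [Group G] [Fintype G] (f h : G → ℂ) :
    charPairing G f h = ∑ g, f g * h g⁻¹ := rfl

namespace Irr

variable {G : Type} [Group G] {ψ φ : G → ℂ}

lemma apply_conj (hψ : ψ ∈ Irr G) (g h : G) : ψ (h * g * h⁻¹) = ψ g := by
  obtain ⟨V, -, rfl⟩ := hψ
  exact V.char_conj g h

lemma apply_inv [Finite G] (hψ : ψ ∈ Irr G) (g : G) : ψ g⁻¹ = conj (ψ g) := by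
  obtain ⟨V, -, rfl⟩ := hψ
  exact V.char_inv g

lemma apply_one_pos (hψ : ψ ∈ Irr G) : 0 < ψ 1 := by
  obtain ⟨V, hV, rfl⟩ := hψ
  simpa using V.finrank_pos_of_simple

lemma conj_apply_one [Finite G] (hψ : ψ ∈ Irr G) : conj (ψ 1) = ψ 1 := by
  rw [← apply_inv hψ, inv_one]

variable [Fintype G]

lemma charPairing_eq (hψ : ψ ∈ Irr G) (hφ : φ ∈ Irr G) :
    charPairing G ψ φ = if ψ = φ then (Fintype.card G : ℂ) else 0 := by
  obtain ⟨V, hV, rfl⟩ := hψ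
  obtain ⟨W, hW, rfl⟩ := hφ
  have hcard : (Fintype.card G : ℂ) ≠ 0 := Nat.cast_ne_zero.mpr Fintype.card_ne_zero
  have : Invertible (Nat.card G : ℂ) := invertibleOfNonzero (by rwa [Nat.card_eq_fintype_card])
  rw [charPairing_apply]
  split_ifs with h
  · have := FDRep.char_orthonormal V V
    rw [if_pos ⟨CategoryTheory.Iso.refl V⟩, Nat.card_eq_fintype_card,
      inv_mul_eq_one₀ hcard] at this
    rw [show W.character = V.character from h.symm, this]
  · have := FDRep.char_orthonormal V W
    rw [if_neg fun ⟨i⟩ => h (FDRep.char_iso i)] at this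
    simpa [hcard] using this

lemma finite : (Irr G).Finite :=
  LinearIndependent.setFinite <| LinearMap.BilinForm.linearIndependent_of_iIsOrtho
    (B := charPairing G) (LinearMap.BilinForm.iIsOrtho_def.mpr fun ψ φ hne => by
      rw [charPairing_eq ψ.2 φ.2, if_neg (Subtype.coe_injective.ne hne)])
    (fun ψ => by simp [charPairing_eq ψ.2 ψ.2])

end Irr

section sigmaChar

variable {G : Type} [Group G] {X : Set (G → ℂ)} {φ : G → ℂ}

lemma sigmaChar_eq_sum (hX : X.Finite) : sigmaChar X = ∑ ψ ∈ hX.toFinset, ψ 1 • ψ := by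
  funext g
  simp [sigmaChar, finsum_mem_eq_finite_toFinset_sum _ hX]

lemma sigmaChar_apply_conj (hX : X ⊆ Irr G) (g h : G) :
    sigmaChar X (h * g * h⁻¹) = sigmaChar X g :=
  finsum_mem_congr rfl fun ψ hψ => by rw [Irr.apply_conj (hX hψ)]

lemma sum_sigmaChar_eq_mul_sigmaChar_one (hX : X.Finite) (T : Finset G) {c : ℂ}
    (hc : ∀ φ ∈ X, ∑ x ∈ T, φ x = c * φ 1) :
    ∑ x ∈ T, sigmaChar X x = c * sigmaChar X 1 := by
  simp only [sigmaChar_eq_sum hX, Finset.sum_apply, Pi.smul_apply, smul_eq_mul]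
  rw [Finset.sum_comm, Finset.mul_sum]
  refine Finset.sum_congr rfl fun φ hφ => ?_
  rw [← Finset.mul_sum, hc φ (hX.mem_toFinset.mp hφ)]
  ring

variable [Fintype G]

lemma sigmaChar_one_pos (hX : X ⊆ Irr G) (hne : X.Nonempty) : 0 < sigmaChar X 1 := by
  have hXf := Irr.finite.subset hX
  rw [sigmaChar_eq_sum hXf, Finset.sum_apply]
  refine Finset.sum_pos (fun ψ hψ => ?_) (hXf.toFinset_nonempty.mpr hne)
  have h := Irr.apply_one_pos (hX (hXf.mem_toFinset.mp hψ))
  simpa using mul_pos h h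

lemma charPairing_sigmaChar (hX : X ⊆ Irr G) (hφ : φ ∈ Irr G) :
    charPairing G (sigmaChar X) φ = if φ ∈ X then Fintype.card G * φ 1 else 0 := by
  have hXf := Irr.finite.subset hX
  rw [sigmaChar_eq_sum hXf, map_sum, LinearMap.sum_apply]
  simp only [map_smul, LinearMap.smul_apply, smul_eq_mul]
  rw [Finset.sum_congr rfl fun ψ hψ => by rw [Irr.charPairing_eq (hX (hXf.mem_toFinset.mp hψ)) hφ]]
  simp [Finset.sum_ite_eq', hXf.mem_toFinset, mul_comm]

lemma charPairing_indicator (K : Set G) (φ : G → ℂ) :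
    charPairing G (K.indicator 1) φ = ∑ x ∈ K.toFinset, φ x⁻¹ := by
  simp only [charPairing_apply, Set.indicator_apply, Pi.one_apply, ite_mul, one_mul, zero_mul,
    Finset.sum_ite, Finset.sum_const_zero, add_zero]
  exact Finset.sum_congr (by ext; simp) fun _ _ => rfl

end sigmaChar

namespace SuperCharTheory

variable {G : Type} [Group G] [Fintype G] (S : SuperCharTheory G) {X Y : Set (G → ℂ)}
  {K : Set G}

lemma subset_Irr (hX : X ∈ S.parts) : X ⊆ Irr G :=
  S.parts_cover ▸ subset_sUnion_of_mem hX

lemma eq_of_mem_of_mem (hX : X ∈ S.parts) (hY : Y ∈ S.parts) {φ : G → ℂ} (hφX : φ ∈ X)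
    (hφY : φ ∈ Y) : X = Y :=
  S.parts_disjoint.elim hX hY (not_disjoint_iff.mpr ⟨φ, hφX, hφY⟩)

lemma charPairing_sigmaChar_sigmaChar (hX : X ∈ S.parts) (hY : Y ∈ S.parts) :
    charPairing G (sigmaChar X) (sigmaChar Y) =
      if X = Y then Fintype.card G * sigmaChar X 1 else 0 := by
  have hYf := Irr.finite.subset (S.subset_Irr hY)
  have hexpand : charPairing G (sigmaChar X) (sigmaChar Y) =
      ∑ φ ∈ hYf.toFinset, φ 1 * charPairing G (sigmaChar X) φ := by
    conv_lhs => rw [sigmaChar_eq_sum hYf]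
    simp only [map_sum, map_smul, smul_eq_mul]
  rw [hexpand]
  split_ifs with h
  · subst h
    calc ∑ φ ∈ hYf.toFinset, φ 1 * charPairing G (sigmaChar X) φ
        = ∑ φ ∈ hYf.toFinset, Fintype.card G * (φ 1 * φ 1) :=
          Finset.sum_congr rfl fun φ hφ => by
            have hφX := hYf.mem_toFinset.mp hφ
            rw [charPairing_sigmaChar (S.subset_Irr hX) (S.subset_Irr hX hφX), if_pos hφX]
            ring
      _ = Fintype.card G * sigmaChar X 1 := by
          rw [← Finset.mul_sum, sigmaChar_eq_sum hYf]
          simp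
  · refine Finset.sum_eq_zero fun φ hφ => ?_
    have hφY := hYf.mem_toFinset.mp hφ
    rw [charPairing_sigmaChar (S.subset_Irr hX) (S.subset_Irr hY hφY),
      if_neg fun hφX => h (S.eq_of_mem_of_mem hX hY hφX hφY), mul_zero]

lemma linearIndependent_sigmaChar :
    LinearIndependent ℂ fun X : S.parts => sigmaChar (X : Set (G → ℂ)) :=
  LinearMap.BilinForm.linearIndependent_of_iIsOrtho (B := charPairing G)
    (LinearMap.BilinForm.iIsOrtho_def.mpr fun X Y hne => by
      rw [S.charPairing_sigmaChar_sigmaChar X.2 Y.2, if_neg (Subtype.coe_injective.ne hne)])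
    fun X => by
      rw [S.charPairing_sigmaChar_sigmaChar X.2 X.2, if_pos rfl]
      exact mul_ne_zero (Nat.cast_ne_zero.mpr Fintype.card_ne_zero)
        (sigmaChar_one_pos (S.subset_Irr X.2) (S.parts_nonempty X X.2)).ne'

lemma mem_span_indicator_of_forall_eq {f : G → ℂ}
    (hf : ∀ K ∈ S.classes, ∀ g ∈ K, ∀ h ∈ K, f g = f h) :
    f ∈ Submodule.span ℂ (range fun K : S.classes => (K : Set G).indicator 1) := by
  refine (Submodule.mem_span_range_iff_exists_fun ℂ).mpr
    ⟨fun K => f (S.classes_nonempty K K.2).choose, ?_⟩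
  funext x
  obtain ⟨K, hK, hxK⟩ : x ∈ ⋃₀ S.classes := S.classes_cover ▸ mem_univ x
  rw [Finset.sum_apply, Finset.sum_eq_single ⟨K, hK⟩]
  · simp [indicator_of_mem hxK, hf K hK _ (S.classes_nonempty K hK).choose_spec x hxK]
  · intro L _ hL
    have hxL : x ∉ (L : Set G) := fun hxL =>
      hL (Subtype.ext (S.classes_disjoint.elim L.2 hK (not_disjoint_iff.mpr ⟨x, hxL, hxK⟩)))
    simp [indicator_of_notMem hxL]
  · simp

lemma span_BCh_eq_span_indicator :
    Submodule.span ℂ (BCh S) =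
      Submodule.span ℂ (range fun K : S.classes => (K : Set G).indicator 1) := by
  rw [BCh, image_eq_range]
  have : Finite S.parts := S.linearIndependent_sigmaChar.finite
  have := Fintype.ofFinite S.parts
  refine Submodule.eq_of_le_of_finrank_le (Submodule.span_le.mpr ?_) ?_
  · rintro _ ⟨X, rfl⟩
    exact S.mem_span_indicator_of_forall_eq (S.sigma_const X X.2)
  · calc finrank ℂ (Submodule.span ℂ (range fun K : S.classes => (K : Set G).indicator 1))
        ≤ Fintype.card S.classes := finrank_range_le_card _
      _ = Fintype.card S.parts := by
        simp only [Fintype.card_eq_nat_card, Nat.card_coe_set_eq, S.card_eq]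
      _ = _ := (finrank_span_eq_card S.linearIndependent_sigmaChar).symm

lemma indicator_mem_span_BCh (hK : K ∈ S.classes) :
    K.indicator 1 ∈ Submodule.span ℂ (BCh S) :=
  S.span_BCh_eq_span_indicator ▸ Submodule.subset_span ⟨⟨K, hK⟩, rfl⟩

lemma conjugatesOf_subset (hK : K ∈ S.classes) {a : G} (ha : a ∈ K) : conjugatesOf a ⊆ K := by
  intro y hy
  obtain ⟨c, rfl⟩ := isConj_iff.mp hy
  have hEq : EqOn (LinearMap.proj (c * a * c⁻¹) : (G → ℂ) →ₗ[ℂ] ℂ) (LinearMap.proj a)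
      (Submodule.span ℂ (BCh S)) :=
    eqOn_span' (by rintro _ ⟨X, hX, rfl⟩; exact sigmaChar_apply_conj (S.subset_Irr hX) a c)
  have h := hEq (S.indicator_mem_span_BCh hK)
  by_contra hK'
  simp [indicator_of_mem ha, indicator_of_notMem hK'] at h

lemma charPairing_div_eq_of_mem_span (hX : X ∈ S.parts) {φ φ' : G → ℂ} (hφ : φ ∈ X)
    (hφ' : φ' ∈ X) {f : G → ℂ}
    (hf : f ∈ Submodule.span ℂ (BCh S)) :
    charPairing G f φ / φ 1 = charPairing G f φ' / φ' 1 := by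
  have hφI := S.subset_Irr hX hφ
  have hφI' := S.subset_Irr hX hφ'
  suffices h : EqOn (((φ 1)⁻¹ • (charPairing G).flip φ : (G → ℂ) →ₗ[ℂ] ℂ))
      (((φ' 1)⁻¹ • (charPairing G).flip φ' : (G → ℂ) →ₗ[ℂ] ℂ)) (BCh S) by
    simpa [div_eq_inv_mul] using eqOn_span' h hf
  rintro _ ⟨Y, hY, rfl⟩
  have hiff : φ ∈ Y ↔ φ' ∈ Y :=
    ⟨fun h => S.eq_of_mem_of_mem hX hY hφ h ▸ hφ', fun h => S.eq_of_mem_of_mem hX hY hφ' h ▸ hφ⟩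
  simp only [LinearMap.smul_apply, LinearMap.BilinForm.flip_apply, smul_eq_mul,
    charPairing_sigmaChar (S.subset_Irr hY) hφI, charPairing_sigmaChar (S.subset_Irr hY) hφI',
    hiff]
  split_ifs
  · field_simp [(Irr.apply_one_pos hφI).ne', (Irr.apply_one_pos hφI').ne']
  · simp

lemma sum_div_apply_one_eq (hK : K ∈ S.classes) (hX : X ∈ S.parts) {φ φ' : G → ℂ}
    (hφ : φ ∈ X) (hφ' : φ' ∈ X) :
    (∑ x ∈ K.toFinset, φ x) / φ 1 = (∑ x ∈ K.toFinset, φ' x) / φ' 1 := by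
  have h := congrArg conj (S.charPairing_div_eq_of_mem_span hX hφ hφ'
    (S.indicator_mem_span_BCh hK))
  simpa [charPairing_indicator, Irr.apply_inv (S.subset_Irr hX hφ),
    Irr.apply_inv (S.subset_Irr hX hφ'), Irr.conj_apply_one (S.subset_Irr hX hφ),
    Irr.conj_apply_one (S.subset_Irr hX hφ')] using h

end SuperCharTheory

section classSum

variable {G : Type} [Group G]

lemma classSum_eq_sum (T : Set G) [Fintype T] :
    classSum T = ∑ x ∈ T.toFinset, MonoidAlgebra.of ℂ G x :=
  finsum_mem_eq_toFinset_sum _ _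

variable [Fintype G]

lemma ncard_conjugatesOf_ne_zero (x : G) : ((conjugatesOf x).ncard : ℂ) ≠ 0 :=
  Nat.cast_ne_zero.mpr ((ncard_pos (toFinite _)).mpr ⟨x, mem_conjugatesOf_self⟩).ne'

/-- Each class `y^G ⊆ T` is counted `|y^G|` times on the right. -/
lemma classSum_eq_sum_inv_ncard_smul {T : Set G} (hT : ∀ a ∈ T, conjugatesOf a ⊆ T) :
    classSum T = ∑ x ∈ T.toFinset,
      ((conjugatesOf x).ncard : ℂ)⁻¹ • classSum (conjugatesOf x) := by
  have hswap : ∀ x y, x ∈ T.toFinset ∧ y ∈ (conjugatesOf x).toFinset ↔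
      x ∈ (conjugatesOf y).toFinset ∧ y ∈ T.toFinset := by
    intro x y
    simp only [mem_toFinset]
    exact ⟨fun ⟨hx, hxy⟩ => ⟨IsConj.symm hxy, hT x hx hxy⟩,
      fun ⟨hyx, hy⟩ => ⟨hT y hy hyx, IsConj.symm hyx⟩⟩
  have hclass : ∀ x ∈ T.toFinset, ∀ y ∈ (conjugatesOf x).toFinset,
      ((conjugatesOf x).ncard : ℂ)⁻¹ • MonoidAlgebra.of ℂ G y =
        ((conjugatesOf y).ncard : ℂ)⁻¹ • MonoidAlgebra.of ℂ G y := fun x _ y hy => by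
    have hxy : y ∈ conjugatesOf x := mem_toFinset.mp hy
    rw [IsConj.conjugatesOf_eq hxy]
  simp only [classSum_eq_sum, Finset.smul_sum]
  rw [Finset.sum_congr rfl fun x hx => Finset.sum_congr rfl (hclass x hx), Finset.sum_comm' hswap]
  refine Finset.sum_congr rfl fun y _ => ?_
  rw [Finset.sum_const, ← ncard_eq_toFinset_card', ← Nat.cast_smul_eq_nsmul ℂ, smul_smul,
    mul_inv_cancel₀ (ncard_conjugatesOf_ne_zero y), one_smul]

lemma map_classSum_of_conjugatesOf_subset {ψ : G → ℂ} (ω : MonoidAlgebra ℂ G →ₗ[ℂ] ℂ)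
    (hω : ∀ a : G, ω (classSum (conjugatesOf a)) = ((conjugatesOf a).ncard : ℂ) * ψ a / ψ 1)
    {T : Set G} (hT : ∀ a ∈ T, conjugatesOf a ⊆ T) :
    ω (classSum T) = (∑ x ∈ T.toFinset, ψ x) / ψ 1 := by
  simp only [classSum_eq_sum_inv_ncard_smul hT, map_sum, map_smul, hω, smul_eq_mul,
    Finset.sum_div]
  exact Finset.sum_congr rfl fun x _ => by
    rw [← mul_div_assoc, inv_mul_cancel_left₀ (ncard_conjugatesOf_ne_zero x)]

end classSum

/-- **Lemma (ω on superclass sums).** Let `S` be a supercharacter theory of `G`, `K` an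
`S`-class and `g ∈ K`.  For every irreducible character `ψ` (with `ω ψ` the central
character, the linear functional satisfying `ω_ψ(L̂) = |L|·ψ(a)/ψ(1)` for each conjugacy
class `L = conjugatesOf a`), if `ψ` is a constituent of the basic `S`-character
`χ = σ_X`, then `ω_ψ(K̂) = |K|·χ(g)/χ(1)`. -/
theorem omega_on_superclass {G : Type} [Group G] [Fintype G]
    (S : SuperCharTheory G)
    (ω : (G → ℂ) → (MonoidAlgebra ℂ G →ₗ[ℂ] ℂ))
    (hω : ∀ ψ ∈ Irr G, ∀ a : G,
      ω ψ (classSum (conjugatesOf a)) = ((conjugatesOf a).ncard : ℂ) * ψ a / ψ 1)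
    (K : Set G) (hK : K ∈ S.classes) (g : G) (hg : g ∈ K)
    (X : Set (G → ℂ)) (hX : X ∈ S.parts) (ψ : G → ℂ) (hψ : ψ ∈ X) :
    ω ψ (classSum K) = (K.ncard : ℂ) * sigmaChar X g / sigmaChar X 1 := by
  have hXI := S.subset_Irr hX
  have hωK : ω ψ (classSum K) = (∑ x ∈ K.toFinset, ψ x) / ψ 1 :=
    map_classSum_of_conjugatesOf_subset _ (hω ψ (hXI hψ)) fun _ ha => S.conjugatesOf_subset hK ha
  have hsum : ∑ x ∈ K.toFinset, sigmaChar X x = ω ψ (classSum K) * sigmaChar X 1 := by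
    refine sum_sigmaChar_eq_mul_sigmaChar_one (Irr.finite.subset hXI) _ fun φ hφ => ?_
    rw [hωK, S.sum_div_apply_one_eq hK hX hψ hφ,
      div_mul_cancel₀ _ (Irr.apply_one_pos (hXI hφ)).ne']
  have hconst : ∑ x ∈ K.toFinset, sigmaChar X x = K.ncard * sigmaChar X g := by
    rw [Finset.sum_congr rfl fun x hx => S.sigma_const X hX K hK x (mem_toFinset.mp hx) g hg,
      Finset.sum_const, nsmul_eq_mul, ncard_eq_toFinset_card']
  rw [← hconst, hsum, mul_div_cancel_right₀ _ (sigmaChar_one_pos hXI (S.parts_nonempty X hX)).ne']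
end
end

section
/- Let G be a finite abelian group with commuting independent indeterminates x_g (g ∈ G), and let Θ = det( x_{g·h⁻¹} )_{g,h ∈ G} be the group determinant of G. Then Θ factors completely into linear factors: Θ = ∏_{χ ∈ Irr(G)} ∑_{g ∈ G} χ(g)·x_g, where Irr(G) is the set of irreducible complex characters (i.e. group homomorphisms G → ℂ×) of G. -/
noncomputable section

open MvPolynomial Matrix

section aux

variable {G : Type} [CommGroup G] [Fintype G] [DecidableEq G]

/-- Homomorphisms to `ℂ` from a group are the same as homomorphisms to `ℂˣ`. -/
def homUnitsEquiv (G : Type) [Group G] : (G →* ℂ) ≃ (G →* ℂˣ) where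
  toFun χ := χ.toHomUnits
  invFun φ := (Units.coeHom ℂ).comp φ
  left_inv χ := by ext g; rfl
  right_inv φ := by ext g; rfl

lemma char_equiv (G : Type) [CommGroup G] [Fintype G] : Nonempty ((G →* ℂ) ≃ G) := by
  have : NeZero ((Monoid.exponent G : ℂ)) := by
    exact ⟨Nat.cast_ne_zero.mpr (Monoid.exponent_ne_zero_of_finite (G := G))⟩
  obtain ⟨e⟩ := CommGroup.monoidHom_mulEquiv_of_hasEnoughRootsOfUnity G ℂ
  exact ⟨(homUnitsEquiv G).trans e.toEquiv⟩

end aux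

/-- **Dedekind.** The group determinant of a finite abelian group factors completely into
linear factors: `Θ = ∏_{χ ∈ Irr(G)} ∑_{g ∈ G} χ(g)·x_g`, the product running over all
group homomorphisms `χ : G → ℂ` (which necessarily take values in `ℂˣ`). -/
theorem abelian_group_det {G : Type} [CommGroup G] [Fintype G] [DecidableEq G] :
    (Matrix.of fun g h : G => (MvPolynomial.X (g * h⁻¹) : MvPolynomial G ℂ)).det
      = ∏ᶠ χ : G →* ℂ, ∑ g : G, MvPolynomial.C (χ g) * MvPolynomial.X g := by
  classical
  obtain ⟨e⟩ := char_equiv G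
  haveI : Fintype (G →* ℂ) := Fintype.ofEquiv G e.symm
  set M : Matrix G G (MvPolynomial G ℂ) :=
    Matrix.of fun g h : G => (MvPolynomial.X (g * h⁻¹) : MvPolynomial G ℂ) with hM
  -- the "character table" matrix
  set V : Matrix G G (MvPolynomial G ℂ) := fun h g => C ((e.symm g) h) with hV
  set d : G → MvPolynomial G ℂ := fun g => ∑ m : G, C ((e.symm g) m⁻¹) * X m with hd
  have key : M * V = V * Matrix.diagonal d := by
    refine Matrix.ext fun g' g => ?_
    rw [Matrix.mul_apply, Matrix.mul_diagonal]
    calc ∑ h : G, M g' h * V h g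
        = ∑ m : G, X (g' * (m⁻¹ * g')⁻¹) * C ((e.symm g) (m⁻¹ * g')) := by
          refine Fintype.sum_equiv ((Equiv.inv G).trans (Equiv.mulRight g')) _ _ fun m => ?_
          simp [hM, hV]
      _ = V g' g * d g := by
          rw [hd, Finset.mul_sum]
          refine Finset.sum_congr rfl fun m _ => ?_
          have h1 : g' * (m⁻¹ * g')⁻¹ = m := by group
          have h2 : (e.symm g) (m⁻¹ * g') = (e.symm g) m⁻¹ * (e.symm g) g' := by
            rw [← _root_.map_mul]
          rw [h1, h2, hV, _root_.map_mul]
          ring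
  have hdet : M.det * V.det = V.det * ∏ g : G, d g := by
    rw [← Matrix.det_mul, key, Matrix.det_mul, Matrix.det_diagonal]
  have hVne : V.det ≠ 0 := by
    have hW : V = (C : ℂ →+* MvPolynomial G ℂ).mapMatrix
        (Matrix.of fun h g : G => (e.symm g) h) := by
      ext h g; rfl
    have hli : LinearIndependent ℂ
        (fun g : G => ((Matrix.of fun h g : G => (e.symm g) h)ᵀ g)) := by
      have := (linearIndependent_monoidHom G ℂ).comp e.symm e.symm.injective
      exact this
    have hu := Matrix.linearIndependent_cols_iff_isUnit.mp hli
    have hdne : (Matrix.of fun h g : G => (e.symm g) h).det ≠ 0 :=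
      (Matrix.isUnit_iff_isUnit_det _ |>.mp hu).ne_zero
    intro h0
    rw [hW, ← RingHom.map_det] at h0
    exact hdne (C_injective G ℂ (h0.trans (map_zero C).symm))
  have hMd : M.det = ∏ g : G, d g := by
    have := hdet
    rw [mul_comm V.det (∏ g : G, d g)] at this
    exact mul_right_cancel₀ hVne this
  rw [hMd, finprod_eq_prod_of_fintype]
  have step1 : ∏ g : G, d g = ∏ χ : G →* ℂ, ∑ m : G, C (χ m⁻¹) * X m := by
    refine (Fintype.prod_equiv e (fun χ => ∑ m : G, C (χ m⁻¹) * X m) d fun χ => ?_).symm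
    simp [hd]
  rw [step1]
  refine Fintype.prod_equiv
    (⟨fun χ => χ.comp invMonoidHom, fun χ => χ.comp invMonoidHom,
      fun χ => by ext g; simp, fun χ => by ext g; simp⟩ : (G →* ℂ) ≃ (G →* ℂ)) _ _ fun χ => ?_
  simp
end
end
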